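/- In the protocol of the previous statement (rules σσ → 22, 02 → 22, σ2 → 22, 0σ → 0σ), from any initial configuration over {0, σ} containing at most one σ, no reachable configuration contains the state 2. -/
import Mathlib


inductive Q3 : Type
  | z : Q3
  | s : Q3
  | two : Q3
deriving DecidableEq

/-- Rules: 00→00, 0σ→0σ, σ0→σ0, 02→22, 20→22, σσ→22, σ2→22, 2σ→22, 22→22. -/
def δ2 : Q3 → Q3 → Q3 × Q3
  | .z, .z => (.z, .z)
  | .z, .s => (.z, .s)
  | .s, .z => (.s, .z)
  | .z, .two => (.two, .two)
  | .two, .z => (.two, .two)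
  | .s, .s => (.two, .two)
  | .s, .two => (.two, .two)
  | .two, .s => (.two, .two)
  | .two, .two => (.two, .two)

def Step {Q : Type*} (δ : Q → Q → Q × Q) (c c' : Multiset Q) : Prop :=
  ∃ q₁ q₂ rest, c = q₁ ::ₘ q₂ ::ₘ rest ∧ c' = (δ q₁ q₂).1 ::ₘ (δ q₁ q₂).2 ::ₘ rest

def Inv6 (c : Multiset Q3) : Prop :=
  (∀ q ∈ c, q = Q3.z ∨ q = Q3.s) ∧ c.count Q3.s ≤ 1

lemma inv6_step {c c' : Multiset Q3} (h : Inv6 c) (hs : Step δ2 c c') : Inv6 c' := by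
  obtain ⟨q₁, q₂, rest, rfl, rfl⟩ := hs
  obtain ⟨hmem, hcnt⟩ := h
  have h1 := hmem q₁ (by simp)
  have h2 := hmem q₂ (by simp)
  have hne : ¬(q₁ = Q3.s ∧ q₂ = Q3.s) := by
    rintro ⟨rfl, rfl⟩
    simp [Multiset.count_cons] at hcnt
  have hδ : δ2 q₁ q₂ = (q₁, q₂) := by
    rcases h1 with rfl | rfl <;> rcases h2 with rfl | rfl <;>
      simp [δ2] at hne ⊢
  rw [hδ]
  exact ⟨hmem, hcnt⟩

/-- Soundness invariant: from an initial configuration over `{0, σ}` containing at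
most one σ, no reachable configuration contains the state 2. -/
theorem stmt6 (x : Multiset Q3) (hin : ∀ q ∈ x, q = Q3.z ∨ q = Q3.s)
    (hone : x.count Q3.s ≤ 1) :
    ∀ c : Multiset Q3, Relation.ReflTransGen (Step δ2) x c → Q3.two ∉ c := by
  intro c hreach
  have : Inv6 c := by
    induction hreach with
    | refl => exact ⟨hin, hone⟩
    | tail _ hs ih => exact inv6_step ih hs
  intro hmem
  rcases this.1 _ hmem with h | h <;> simp at h
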